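/- arXiv:2207.01748 — 3 statements merged into one kernel-verified Lean document; each statement's English description precedes it below -/
import Mathlib

section
/- Suppose the initial configuration (s_i^0, x_i, S_i, γ_i)_{1≤i≤N} satisfies, for every i ∈ {1,…,N}: s_m < s_i^0 < S_i, s_m < S_i < s_m·e^{R_M}, and γ_i > 0. Then the competition system of N differential equations has a unique global solution (s_1,…,s_N) defined on all of ℝ_+, and moreover for all t ≥ 0 and all i ∈ {1,…,N} the competition index satisfies 0 ≤ C_i^N(t) ≤ 1. -/
/-!
On the positive orthant the right-hand side of the competition system is `C¹`, hence locally
Lipschitz, so two solutions that start together agree as long as one of them stays in the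
orthant. For states in the box `[s_m, S_1] × ⋯ × [s_m, S_N]` every potential lies in `[0, 1]`,
since `0 ≤ log (s'/s_m) ≤ R_M` and `0 ≤ 1 + tanh ≤ 2`; so `0 ≤ C_i^N ≤ 1`, and the `i`-th
component of the field is `≥ 0` on the face `s_i = s_m` and `≤ 0` on the face `s_i = S_i`.
Precomposing the field with the projection onto the box makes it globally Lipschitz and bounded,
which gives a solution for all `t ≥ 0`; by the sign conditions this solution never leaves the
box, where the projection is the identity, so it solves the original system.
-/

open MeasureTheory Set

/-- The pairwise competition potential
`C(s, s', d) = log(s'/s_m) / (2 R_M (1 + d²/σ_x²)) · (1 + tanh(log(s'/s)/σ_r))`. -/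
noncomputable def pot (sm RM σx σr s s' d : ℝ) : ℝ :=
  Real.log (s' / sm) / (2 * RM * (1 + d ^ 2 / σx ^ 2)) *
    (1 + Real.tanh (Real.log (s' / s) / σr))

/-- The competition index `C_i^N(t) = (1/(N-1)) Σ_{j≠i} C(s_i(t), s_j(t), |x_i - x_j|)`. -/
noncomputable def cIdx (sm RM σx σr : ℝ) {N : ℕ}
    (x : Fin N → EuclideanSpace ℝ (Fin 2)) (s : Fin N → ℝ → ℝ) (i : Fin N) (t : ℝ) : ℝ :=
  (1 / ((N : ℝ) - 1)) *
    ∑ j ∈ Finset.univ.erase i, pot sm RM σx σr (s i t) (s j t) (dist (x i) (x j))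

/-- `s : Fin N → ℝ → ℝ` is a global solution (on `ℝ₊`) of the competition system
`ds_i/dt = γ_i s_i (log(S_i/s_m)(1 − C_i^N(t)) − log(s_i/s_m))`, `s_i(0) = s_i^0`. -/
def IsCompetitionSol (sm RM σx σr : ℝ) {N : ℕ} (s0 : Fin N → ℝ)
    (x : Fin N → EuclideanSpace ℝ (Fin 2)) (Sa γ : Fin N → ℝ) (s : Fin N → ℝ → ℝ) : Prop :=
  ∀ i, s i 0 = s0 i ∧ ∀ t, 0 ≤ t →
    HasDerivWithinAt (s i)
      (γ i * s i t * (Real.log (Sa i / sm) * (1 - cIdx sm RM σx σr x s i t)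
        - Real.log (s i t / sm)))
      (Set.Ici 0) t

open Filter Topology NNReal

section ODE

variable {E : Type*} [NormedAddCommGroup E] [NormedSpace ℝ E]

theorem LipschitzWith.exists_forall_hasDerivWithinAt_Ici [CompleteSpace E] {G : E → E} {K : ℝ≥0}
    (hG : LipschitzWith K G) {C : ℝ} (hGC : ∀ x, ‖G x‖ ≤ C) (x₀ : E) :
    ∃ f : ℝ → E, f 0 = x₀ ∧ ∀ t ∈ Ici (0 : ℝ), HasDerivWithinAt f (G (f t)) (Ici 0) t := by
  have hloc (n : ℕ) : ∃ f : ℝ → E, f 0 = x₀ ∧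
      ∀ t ∈ Icc (0 : ℝ) n, HasDerivWithinAt f (G (f t)) (Icc 0 n) t :=
    (IsPicardLindelof.of_time_independent (t₀ := ⟨0, le_rfl, n.cast_nonneg⟩)
      (a := C.toNNReal * n) (r := 0) (L := C.toNNReal)
      (fun x _ => (hGC x).trans (Real.le_coe_toNNReal C))
      hG.lipschitzOnWith (by simp)).exists_eq_forall_mem_Icc_hasDerivWithinAt₀
  choose F hF0 hF using hloc
  have hF_Ici (n : ℕ) : ∀ t ∈ Ico (0 : ℝ) n, HasDerivWithinAt (F n) (G (F n t)) (Ici t) t :=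
    fun t ht => (hF n t (Ico_subset_Icc_self ht)).mono_of_mem_nhdsWithin (Icc_mem_nhdsGE_of_mem ht)
  have hagree (m n : ℕ) : EqOn (F m) (F n) (Icc 0 (min (m : ℝ) n)) :=
    ODE_solution_unique (v := fun _ => G) (fun _ => hG)
      (fun t ht => ((hF m t ⟨ht.1, ht.2.trans (min_le_left _ _)⟩).continuousWithinAt).mono
        (Icc_subset_Icc_right (min_le_left _ _)))
      (fun t ht => hF_Ici m t ⟨ht.1, ht.2.trans_le (min_le_left _ _)⟩)
      (fun t ht => ((hF n t ⟨ht.1, ht.2.trans (min_le_right _ _)⟩).continuousWithinAt).mono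
        (Icc_subset_Icc_right (min_le_right _ _)))
      (fun t ht => hF_Ici n t ⟨ht.1, ht.2.trans_le (min_le_right _ _)⟩)
      ((hF0 m).trans (hF0 n).symm)
  refine ⟨fun t => F (⌈t⌉₊ + 1) t, by simpa using hF0 1, fun t ht => ?_⟩
  have hlt (τ : ℝ) : τ < (⌈τ⌉₊ + 1 : ℕ) := by push_cast; linarith [Nat.le_ceil τ]
  have hnhds : Icc (0 : ℝ) (⌈t⌉₊ + 1 : ℕ) ∈ 𝓝[Ici 0] t :=
    inter_mem_nhdsWithin _ (Iic_mem_nhds (hlt t))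
  refine ((hF _ t ⟨ht, (hlt t).le⟩).mono_of_mem_nhdsWithin hnhds).congr_of_eventuallyEq ?_ rfl
  filter_upwards [hnhds] with τ hτ
  exact hagree _ _ ⟨hτ.1, le_min (hlt τ).le hτ.2⟩

theorem ODE_solution_unique_Ici_of_locallyLipschitzOn {v : E → E} {U : Set E} (hU : IsOpen U)
    (hv : LocallyLipschitzOn U v) {f g : ℝ → E}
    (hf : ∀ t ∈ Ici (0 : ℝ), HasDerivWithinAt f (v (f t)) (Ici 0) t)
    (hfU : ∀ t ∈ Ici (0 : ℝ), f t ∈ U)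
    (hg : ∀ t ∈ Ici (0 : ℝ), HasDerivWithinAt g (v (g t)) (Ici 0) t) (h0 : f 0 = g 0) :
    EqOn f g (Ici 0) := by
  have hfc : ContinuousOn f (Ici 0) := fun t ht => (hf t ht).continuousWithinAt
  have hgc : ContinuousOn g (Ici 0) := fun t ht => (hg t ht).continuousWithinAt
  intro T hT
  suffices Icc 0 T ⊆ {t | f t = g t} from this ⟨hT, le_rfl⟩
  refine IsClosed.Icc_subset_of_forall_mem_nhdsWithin ?_ h0 fun x ⟨hfgx, hx⟩ => ?_
  · rw [inter_comm]
    exact ((hfc.prodMk hgc).mono Icc_subset_Ici_self).preimage_isClosed_of_isClosed isClosed_Icc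
      isClosed_diagonal
  · obtain ⟨K, V, hV, hK⟩ := hv (hfU x hx.1)
    rw [hU.nhdsWithin_eq (hfU x hx.1)] at hV
    have hnear : ∀ᶠ τ in 𝓝[≥] x, f τ ∈ V ∧ g τ ∈ V :=
      nhdsWithin_mono _ (Ici_subset_Ici.2 hx.1)
        ((hfc x hx.1).eventually_mem hV |>.and ((hgc x hx.1).eventually_mem (hfgx ▸ hV)))
    obtain ⟨b, hxb, hb⟩ := mem_nhdsGE_iff_exists_Ico_subset.1 hnear
    have hfg : EqOn f g (Icc x b) :=
      ODE_solution_unique_of_mem_Icc_right (v := fun _ => v) (s := fun _ => V) (fun _ _ => hK)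
        (hfc.mono fun τ hτ => hx.1.trans hτ.1)
        (fun τ hτ => (hf τ (hx.1.trans hτ.1)).mono (Ici_subset_Ici.2 (hx.1.trans hτ.1)))
        (fun τ hτ => (hb hτ).1)
        (hgc.mono fun τ hτ => hx.1.trans hτ.1)
        (fun τ hτ => (hg τ (hx.1.trans hτ.1)).mono (Ici_subset_Ici.2 (hx.1.trans hτ.1)))
        (fun τ hτ => (hb hτ).2) hfgx
    exact mem_of_superset (Ioc_mem_nhdsGT hxb) fun τ hτ => hfg (Ioc_subset_Icc_self hτ)

end ODE

theorem image_le_of_deriv_nonpos_above {f f' : ℝ → ℝ} {c : ℝ}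
    (hf : ∀ t ∈ Ici (0 : ℝ), HasDerivWithinAt f (f' t) (Ici 0) t) (h0 : f 0 ≤ c)
    (hf' : ∀ t ∈ Ici (0 : ℝ), c < f t → f' t ≤ 0) : ∀ t ∈ Ici (0 : ℝ), f t ≤ c := by
  intro T (hT : 0 ≤ T)
  -- compare with the barriers `c + ε (1 + t)`, whose slope `ε` beats `f'` wherever they touch
  have hbarrier (ε : ℝ) (hε : 0 < ε) : f T ≤ c + ε * (1 + T) := by
    refine image_le_of_deriv_right_lt_deriv_boundary' (B := fun t => c + ε * (1 + t))
      (B' := fun _ => ε)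
      (fun t ht => (hf t ht.1).continuousWithinAt.mono (Icc_subset_Ici_self))
      (fun t ht => (hf t ht.1).mono (Ici_subset_Ici.2 ht.1)) (by linarith) (by fun_prop)
      (fun t _ => ?_) (fun t ht hft => ?_) ⟨hT, le_rfl⟩
    · simpa using (((hasDerivAt_id t).const_add 1).const_mul ε).const_add c |>.hasDerivWithinAt
    · have : 0 < ε * (1 + t) := by nlinarith [ht.1]
      exact (hf' t ht.1 (by linarith)).trans_lt hε
  refine le_of_forall_pos_le_add fun δ hδ => ?_
  simpa [div_mul_cancel₀ δ (by linarith : (1 + T) ≠ 0)] using hbarrier (δ / (1 + T)) (by positivity)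

@[fun_prop]
lemma contDiff_tanh {n : WithTop ℕ∞} : ContDiff ℝ n Real.tanh := by
  rw [show Real.tanh = fun x => Real.sinh x / Real.cosh x from
    funext Real.tanh_eq_sinh_div_cosh]
  exact Real.contDiff_sinh.div Real.contDiff_cosh fun x => (Real.cosh_pos x).ne'

section Clamp

variable {ι : Type*} (a b : ι → ℝ) (h : a ≤ b)

noncomputable def clampIcc (v : ι → ℝ) : ι → ℝ := fun i => projIcc (a i) (b i) (h i) (v i)

variable {a b h}

lemma clampIcc_mem (v : ι → ℝ) : clampIcc a b h v ∈ Icc a b :=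
  ⟨fun i => (projIcc (a i) (b i) (h i) (v i)).2.1, fun i => (projIcc (a i) (b i) (h i) (v i)).2.2⟩

lemma clampIcc_of_mem {v : ι → ℝ} (hv : v ∈ Icc a b) : clampIcc a b h v = v :=
  funext fun i => by simp [clampIcc, projIcc_of_mem (h i) ⟨hv.1 i, hv.2 i⟩]

lemma clampIcc_apply_of_le {v : ι → ℝ} {i : ι} (hv : v i ≤ a i) : clampIcc a b h v i = a i := by
  simp [clampIcc, projIcc_of_le_left (h i) hv]

lemma clampIcc_apply_of_ge {v : ι → ℝ} {i : ι} (hv : b i ≤ v i) : clampIcc a b h v i = b i := by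
  simp [clampIcc, projIcc_of_right_le (h i) hv]

lemma lipschitzWith_clampIcc [Fintype ι] : LipschitzWith 1 (clampIcc a b h) :=
  LipschitzWith.of_dist_le_mul fun v w => by
    rw [NNReal.coe_one, one_mul, dist_pi_le_iff dist_nonneg]
    exact fun i => ((LipschitzWith.projIcc (h i)).dist_le_mul (v i) (w i)).trans
      (by simpa using dist_le_pi_dist v w i)

theorem ContDiffOn.exists_forall_hasDerivWithinAt_Ici_comp_clampIcc [Fintype ι]
    {G : (ι → ℝ) → ι → ℝ} (hG : ContDiffOn ℝ 1 G (Icc a b)) (x₀ : ι → ℝ) :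
    ∃ u : ℝ → ι → ℝ, u 0 = x₀ ∧
      ∀ t ∈ Ici (0 : ℝ), HasDerivWithinAt u (G (clampIcc a b h (u t))) (Ici 0) t := by
  obtain ⟨K, hK⟩ := hG.exists_lipschitzOnWith one_ne_zero (convex_Icc a b) isCompact_Icc
  obtain ⟨C, hC⟩ := isCompact_Icc.exists_bound_of_continuousOn hG.continuousOn
  have hGc : LipschitzWith (K * 1) (G ∘ clampIcc a b h) := lipschitzOnWith_univ.1
    (hK.comp lipschitzWith_clampIcc.lipschitzOnWith fun v _ => clampIcc_mem v)
  exact hGc.exists_forall_hasDerivWithinAt_Ici (fun v => hC _ (clampIcc_mem v)) x₀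

end Clamp

section Model

variable {sm RM σx σr : ℝ}

lemma pot_nonneg (hsm : 0 < sm) (hRM : 0 < RM) {s s' : ℝ} (hs' : sm ≤ s') (d : ℝ) :
    0 ≤ pot sm RM σx σr s s' d :=
  mul_nonneg (div_nonneg (Real.log_nonneg ((one_le_div hsm).2 hs')) (by positivity))
    (by linarith [Real.neg_one_lt_tanh (Real.log (s' / s) / σr)])

lemma pot_le_one (hsm : 0 < sm) (hRM : 0 < RM) {s s' : ℝ} (hs' : s' ∈ Icc sm (sm * Real.exp RM))
    (d : ℝ) : pot sm RM σx σr s s' d ≤ 1 := by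
  have hlog : Real.log (s' / sm) ≤ RM := by
    rw [Real.log_le_iff_le_exp (div_pos (hsm.trans_le hs'.1) hsm), div_le_iff₀ hsm, mul_comm]
    exact hs'.2
  have hhalf : Real.log (s' / sm) / (2 * RM * (1 + d ^ 2 / σx ^ 2)) ≤ 1 / 2 := by
    rw [div_le_iff₀ (by positivity)]
    nlinarith [div_nonneg (sq_nonneg d) (sq_nonneg σx)]
  calc pot sm RM σx σr s s' d ≤ 1 / 2 * 2 :=
        mul_le_mul hhalf (by linarith [Real.tanh_lt_one (Real.log (s' / s) / σr)])
          (by linarith [Real.neg_one_lt_tanh (Real.log (s' / s) / σr)]) (by norm_num)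
    _ = 1 := by norm_num

variable {N : ℕ}

/-- `cIdx sm RM σx σr x s i t` unfolds to `compIndex sm RM σx σr x (fun j => s j t) i`. -/
noncomputable def compIndex (sm RM σx σr : ℝ) (x : Fin N → EuclideanSpace ℝ (Fin 2))
    (v : Fin N → ℝ) (i : Fin N) : ℝ :=
  (1 / ((N : ℝ) - 1)) * ∑ j ∈ Finset.univ.erase i, pot sm RM σx σr (v i) (v j) (dist (x i) (x j))

lemma compIndex_mem_Icc (hsm : 0 < sm) (hRM : 0 < RM) (x : Fin N → EuclideanSpace ℝ (Fin 2))
    {v : Fin N → ℝ} (hv : ∀ j, v j ∈ Icc sm (sm * Real.exp RM)) (i : Fin N) :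
    compIndex sm RM σx σr x v i ∈ Icc 0 1 := by
  have hcard : ((Finset.univ.erase i).card : ℝ) = N - 1 := by
    rw [Finset.card_erase_of_mem (Finset.mem_univ i), Finset.card_fin, Nat.cast_pred i.pos]
  have hN : (0 : ℝ) ≤ N - 1 := hcard ▸ Nat.cast_nonneg _
  rw [compIndex, one_div_mul_eq_div]
  refine ⟨div_nonneg (Finset.sum_nonneg fun j _ => pot_nonneg hsm hRM (hv j).1 _) hN,
    div_le_one_of_le₀ ?_ hN⟩
  calc ∑ j ∈ Finset.univ.erase i, pot sm RM σx σr (v i) (v j) (dist (x i) (x j))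
      ≤ ∑ j ∈ Finset.univ.erase i, (1 : ℝ) :=
        Finset.sum_le_sum fun j _ => pot_le_one hsm hRM (hv j) _
    _ = N - 1 := by rw [Finset.sum_const, nsmul_one, hcard]

noncomputable def competitionField (sm RM σx σr : ℝ) (Sa γ : Fin N → ℝ)
    (x : Fin N → EuclideanSpace ℝ (Fin 2)) (v : Fin N → ℝ) : Fin N → ℝ :=
  fun i => γ i * v i * (Real.log (Sa i / sm) * (1 - compIndex sm RM σx σr x v i)
    - Real.log (v i / sm))

lemma isCompetitionSol_iff {s0 Sa γ : Fin N → ℝ} {x : Fin N → EuclideanSpace ℝ (Fin 2)}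
    {u : ℝ → Fin N → ℝ} :
    IsCompetitionSol sm RM σx σr s0 x Sa γ (fun i t => u t i) ↔ u 0 = s0 ∧
      ∀ t ∈ Ici (0 : ℝ),
        HasDerivWithinAt u (competitionField sm RM σx σr Sa γ x (u t)) (Ici 0) t := by
  simp only [IsCompetitionSol, hasDerivWithinAt_pi, funext_iff, forall_and, mem_Ici]
  exact and_congr Iff.rfl ⟨fun h t ht i => h i t ht, fun h i t ht => h t ht i⟩

lemma contDiffOn_competitionField (hsm : 0 < sm) (Sa γ : Fin N → ℝ)
    (x : Fin N → EuclideanSpace ℝ (Fin 2)) :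
    ContDiffOn ℝ 1 (competitionField sm RM σx σr Sa γ x) (univ.pi fun _ => Ioi 0) := by
  refine contDiffOn_pi.2 fun i => ?_
  unfold competitionField compIndex pot
  fun_prop (disch := intro v hv; simp only [mem_univ_pi, mem_Ioi] at hv; simp [(hv _).ne', hsm.ne'])

end Model

section Invariance

variable {sm RM σx σr : ℝ} {N : ℕ} {Sa γ : Fin N → ℝ} {x : Fin N → EuclideanSpace ℝ (Fin 2)}
  (hle : (fun _ => sm) ≤ Sa)

lemma compIndex_mem_Icc_of_mem_Icc (hsm : 0 < sm) (hRM : 0 < RM)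
    (hSa : ∀ j, Sa j ≤ sm * Real.exp RM) {v : Fin N → ℝ} (hv : v ∈ Icc (fun _ => sm) Sa)
    (i : Fin N) : compIndex sm RM σx σr x v i ∈ Icc 0 1 :=
  compIndex_mem_Icc hsm hRM x (fun j => ⟨hv.1 j, (hv.2 j).trans (hSa j)⟩) i

lemma competitionField_clampIcc_nonneg (hsm : 0 < sm) (hRM : 0 < RM)
    (hSa : ∀ j, Sa j ≤ sm * Real.exp RM) (hγ : ∀ i, 0 ≤ γ i) {v : Fin N → ℝ} {i : Fin N}
    (hv : v i ≤ sm) :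
    0 ≤ competitionField sm RM σx σr Sa γ x (clampIcc (fun _ => sm) Sa hle v) i := by
  have hc := compIndex_mem_Icc_of_mem_Icc (σx := σx) (σr := σr) (x := x) hsm hRM hSa
    (clampIcc_mem (h := hle) v) i
  have hL : 0 ≤ Real.log (Sa i / sm) := Real.log_nonneg ((one_le_div hsm).2 (hle i))
  rw [competitionField, clampIcc_apply_of_le hv, div_self hsm.ne', Real.log_one, sub_zero]
  exact mul_nonneg (mul_nonneg (hγ i) hsm.le) (mul_nonneg hL (sub_nonneg.2 hc.2))

lemma competitionField_clampIcc_nonpos (hsm : 0 < sm) (hRM : 0 < RM)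
    (hSa : ∀ j, Sa j ≤ sm * Real.exp RM) (hγ : ∀ i, 0 ≤ γ i) {v : Fin N → ℝ} {i : Fin N}
    (hv : Sa i ≤ v i) :
    competitionField sm RM σx σr Sa γ x (clampIcc (fun _ => sm) Sa hle v) i ≤ 0 := by
  have hc := compIndex_mem_Icc_of_mem_Icc (σx := σx) (σr := σr) (x := x) hsm hRM hSa
    (clampIcc_mem (h := hle) v) i
  have hL : 0 ≤ Real.log (Sa i / sm) := Real.log_nonneg ((one_le_div hsm).2 (hle i))
  rw [competitionField, clampIcc_apply_of_ge hv,
    show ∀ L c : ℝ, L * (1 - c) - L = -(L * c) by intros; ring, mul_neg, neg_nonpos]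
  exact mul_nonneg (mul_nonneg (hγ i) (hsm.le.trans (hle i))) (mul_nonneg hL hc.1)

lemma mem_Icc_of_hasDerivWithinAt_competitionField_clampIcc (hsm : 0 < sm) (hRM : 0 < RM)
    (hSa : ∀ j, Sa j ≤ sm * Real.exp RM) (hγ : ∀ i, 0 ≤ γ i) {u : ℝ → Fin N → ℝ}
    (hu0 : u 0 ∈ Icc (fun _ => sm) Sa)
    (hu : ∀ t ∈ Ici (0 : ℝ),
      HasDerivWithinAt u
        (competitionField sm RM σx σr Sa γ x (clampIcc (fun _ => sm) Sa hle (u t))) (Ici 0) t) :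
    ∀ t ∈ Ici (0 : ℝ), u t ∈ Icc (fun _ => sm) Sa := by
  have hui (i : Fin N) (t : ℝ) (ht : t ∈ Ici 0) := hasDerivWithinAt_pi.1 (hu t ht) i
  refine fun t ht => ⟨fun i => ?_, fun i => ?_⟩
  · have := image_le_of_deriv_nonpos_above (fun τ hτ => (hui i τ hτ).neg)
      (neg_le_neg (hu0.1 i)) (fun τ _ hτ => neg_nonpos.2
        (competitionField_clampIcc_nonneg hle hsm hRM hSa hγ (neg_lt_neg_iff.1 hτ).le)) t ht
    exact neg_le_neg_iff.1 this
  · exact image_le_of_deriv_nonpos_above (hui i) (hu0.2 i)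
      (fun τ _ hτ => competitionField_clampIcc_nonpos hle hsm hRM hSa hγ hτ.le) t ht

end Invariance

theorem stmt_1_general (sm RM σx σr : ℝ) (hsm : 0 < sm) (hRM : 0 < RM)
    (N : ℕ) (s0 Sa γ : Fin N → ℝ) (x : Fin N → EuclideanSpace ℝ (Fin 2))
    (hinit : ∀ i, sm < s0 i ∧ s0 i < Sa i)
    (hS : ∀ i, sm < Sa i ∧ Sa i < sm * Real.exp RM)
    (hγ : ∀ i, 0 < γ i) :
    ∃ s : Fin N → ℝ → ℝ,
      IsCompetitionSol sm RM σx σr s0 x Sa γ s ∧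
      (∀ s' : Fin N → ℝ → ℝ, IsCompetitionSol sm RM σx σr s0 x Sa γ s' →
        ∀ i, ∀ t, 0 ≤ t → s' i t = s i t) ∧
      (∀ t, 0 ≤ t → ∀ i,
        0 ≤ cIdx sm RM σx σr x s i t ∧ cIdx sm RM σx σr x s i t ≤ 1) := by
  have hle : (fun _ => sm) ≤ Sa := fun i => (hS i).1.le
  have hSa : ∀ i, Sa i ≤ sm * Real.exp RM := fun i => (hS i).2.le
  have hbox_sub : Icc (fun _ => sm) Sa ⊆ univ.pi fun _ => Ioi 0 :=
    fun v hv i _ => hsm.trans_le (hv.1 i)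
  have hF := contDiffOn_competitionField (RM := RM) (σx := σx) (σr := σr) hsm Sa γ x
  obtain ⟨u, hu0, hu⟩ := (hF.mono hbox_sub).exists_forall_hasDerivWithinAt_Ici_comp_clampIcc
    (h := hle) s0
  have hbox := mem_Icc_of_hasDerivWithinAt_competitionField_clampIcc hle hsm hRM hSa
    (fun i => (hγ i).le) (hu0 ▸ ⟨fun i => (hinit i).1.le, fun i => (hinit i).2.le⟩) hu
  have hsol : ∀ t ∈ Ici (0 : ℝ), HasDerivWithinAt u
      (competitionField sm RM σx σr Sa γ x (u t)) (Ici 0) t := fun t ht =>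
    clampIcc_of_mem (hbox t ht) ▸ hu t ht
  refine ⟨fun i t => u t i, isCompetitionSol_iff.2 ⟨hu0, hsol⟩, fun s' hs' i t ht => ?_,
    fun t ht i => compIndex_mem_Icc_of_mem_Icc hsm hRM hSa (hbox t ht) i⟩
  obtain ⟨hs'0, hs'⟩ := isCompetitionSol_iff (u := fun t i => s' i t).1 hs'
  have huniq := ODE_solution_unique_Ici_of_locallyLipschitzOn
    (isOpen_set_pi finite_univ fun _ _ => isOpen_Ioi)
    (hF.locallyLipschitzOn (convex_pi fun _ _ => convex_Ioi 0)) hsol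
    (fun t ht => hbox_sub (hbox t ht)) hs' (hu0.trans hs'0.symm)
  exact (congrFun (huniq ht) i).symm

/-- under the admissibility assumptions on the initial configuration, the
competition system has a unique global solution, and all competition indices stay in `[0,1]`. -/
theorem stmt_1 (sm RM σx σr : ℝ) (hsm : 0 < sm) (hRM : 0 < RM) (hσx : 0 < σx) (hσr : 0 < σr)
    (N : ℕ) (hN : 1 < N) (s0 Sa γ : Fin N → ℝ) (x : Fin N → EuclideanSpace ℝ (Fin 2))
    (hinit : ∀ i, sm < s0 i ∧ s0 i < Sa i)
    (hS : ∀ i, sm < Sa i ∧ Sa i < sm * Real.exp RM)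
    (hγ : ∀ i, 0 < γ i) :
    ∃ s : Fin N → ℝ → ℝ,
      IsCompetitionSol sm RM σx σr s0 x Sa γ s ∧
      (∀ s' : Fin N → ℝ → ℝ, IsCompetitionSol sm RM σx σr s0 x Sa γ s' →
        ∀ i, ∀ t, 0 ≤ t → s' i t = s i t) ∧
      (∀ t, 0 ≤ t → ∀ i,
        0 ≤ cIdx sm RM σx σr x s i t ∧ cIdx sm RM σx σr x s i t ≤ 1) :=
  stmt_1_general sm RM σx σr hsm hRM N s0 Sa γ x hinit hS hγ
end

section
/- Under the hypotheses s_m < s_i^0 < S_i, s_m < S_i < s_m·e^{R_M}, γ_i > 0 for all i, the unique global solution (s_1,…,s_N) of the competition system satisfies, for every i and every t ≥ 0, the sandwich bound s_m·(s_i^0/s_m)^{e^{−γ_i t}} ≤ s_i(t) ≤ S_i·(s_i^0/s_m)^{e^{−γ_i t}}; in particular s_m < s_i(t) < S_i for all t ≥ 0. -/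
open MeasureTheory Set

/-!
With `u = log (s_i / s_m)` and `L = log (S_i / s_m)` the equation reads `u' = γ_i (L (1 - C_i) - u)`.
While every plant stays in `[s_m, s_m e^{R_M}]`, the competition index `C_i` lies in `[0, 1]`, so
`s_i` is a supersolution of the Gompertz equation `f' = γ_i f log (s_m / f)` and a subsolution of
`f' = γ_i f log (S_i / f)`. Comparison with the explicit Gompertz curves (the quantity
`e^{γ t} log (f / c)` is monotone) then traps `s_i` strictly inside `(s_m, S_i)`, and a continuous
induction in time removes the a priori assumption, since strict bounds persist for a short while.
-/

open Real Filter Topology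

/-- The solution of the Gompertz equation `f' = γ f log (c / f)` with `f 0 = a`. -/
noncomputable def gompertz (c a γ t : ℝ) : ℝ := c * (a / c) ^ exp (-γ * t)

lemma gompertz_le_iff {c a γ t y : ℝ} (hc : 0 < c) (ha : 0 < a) (hy : 0 < y) :
    gompertz c a γ t ≤ y ↔ log (a / c) ≤ exp (γ * t) * log (y / c) := by
  rw [gompertz, ← le_div_iff₀' hc, ← log_le_log_iff (by positivity) (by positivity),
    log_rpow (by positivity), neg_mul, exp_neg, inv_mul_le_iff₀ (exp_pos _)]

lemma le_gompertz_iff {c a γ t y : ℝ} (hc : 0 < c) (ha : 0 < a) (hy : 0 < y) :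
    y ≤ gompertz c a γ t ↔ exp (γ * t) * log (y / c) ≤ log (a / c) := by
  rw [gompertz, ← div_le_iff₀' hc, ← log_le_log_iff (by positivity) (by positivity),
    log_rpow (by positivity), neg_mul, exp_neg, le_inv_mul_iff₀ (exp_pos _)]

lemma gompertz_zero (c a γ : ℝ) (hc : c ≠ 0) : gompertz c a γ 0 = a := by
  simp [gompertz, mul_div_cancel₀ _ hc]

lemma lt_gompertz {c a γ t : ℝ} (hc : 0 < c) (hca : c < a) : c < gompertz c a γ t :=
  lt_mul_of_one_lt_right hc (one_lt_rpow ((one_lt_div hc).2 hca) (exp_pos _))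

lemma gompertz_lt {c a γ t : ℝ} (hc : 0 < c) (ha : 0 < a) (hac : a < c) :
    gompertz c a γ t < c :=
  mul_lt_of_lt_one_right hc (rpow_lt_one (by positivity) ((div_lt_one hc).2 hac) (exp_pos _))

lemma continuous_gompertz (c a γ : ℝ) : Continuous (gompertz c a γ) :=
  continuous_const.mul <| continuous_const.rpow (by fun_prop) fun _ => Or.inr (exp_pos _)

lemma hasDerivWithinAt_exp_mul_mul {u : ℝ → ℝ} {u' γ t : ℝ} {D : Set ℝ}
    (hu : HasDerivWithinAt u u' D t) :
    HasDerivWithinAt (fun t => exp (γ * t) * u t) (exp (γ * t) * (γ * u t + u')) D t := by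
  have hexp : HasDerivAt (fun t => exp (γ * t)) (exp (γ * t) * γ) t := by
    simpa using ((hasDerivAt_id t).const_mul γ).exp
  exact (hexp.hasDerivWithinAt.mul hu).congr_deriv (by ring)

lemma monotoneOn_exp_mul_mul {D : Set ℝ} (hD : Convex ℝ D) {u u' : ℝ → ℝ} {γ : ℝ}
    (hu : ∀ t ∈ D, HasDerivWithinAt u (u' t) D t) (hle : ∀ t ∈ D, -γ * u t ≤ u' t) :
    MonotoneOn (fun t => exp (γ * t) * u t) D := by
  refine monotoneOn_of_hasDerivWithinAt_nonneg hD
    (fun t ht => (hasDerivWithinAt_exp_mul_mul (γ := γ) (hu t ht)).continuousWithinAt)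
    (fun t ht => ((hasDerivWithinAt_exp_mul_mul (hu t (interior_subset ht))).hasDerivAt
      (mem_interior_iff_mem_nhds.1 ht)).hasDerivWithinAt) fun t ht => ?_
  have := hle t (interior_subset ht)
  exact mul_nonneg (exp_pos _).le (by linarith)

lemma antitoneOn_exp_mul_mul {D : Set ℝ} (hD : Convex ℝ D) {u u' : ℝ → ℝ} {γ : ℝ}
    (hu : ∀ t ∈ D, HasDerivWithinAt u (u' t) D t) (hle : ∀ t ∈ D, u' t ≤ -γ * u t) :
    AntitoneOn (fun t => exp (γ * t) * u t) D := by
  intro a ha b hb hab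
  have := monotoneOn_exp_mul_mul (γ := γ) (u := fun t => -u t) hD (fun t ht => (hu t ht).neg)
    (fun t ht => by linarith [hle t ht]) ha hb hab
  simpa only [mul_neg, neg_le_neg_iff] using this

lemma hasDerivWithinAt_log_div {f : ℝ → ℝ} {f' c t : ℝ} {D : Set ℝ} (hc : 0 < c)
    (hf : HasDerivWithinAt f f' D t) (hpos : 0 < f t) :
    HasDerivWithinAt (fun t => log (f t / c)) (f' / f t) D t := by
  convert (hf.div_const c).log (by positivity) using 1
  field_simp

lemma Real.log_div_rev {x y : ℝ} : log (x / y) = -log (y / x) := by rw [← log_inv, inv_div]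

lemma gompertz_le_of_supersolution {f f' : ℝ → ℝ} {c a γ τ σ : ℝ} (hc : 0 < c) (ha : 0 < a)
    (hτσ : τ ≤ σ) (hf : ∀ t ∈ Icc τ σ, HasDerivWithinAt f (f' t) (Icc τ σ) t)
    (hpos : ∀ t ∈ Icc τ σ, 0 < f t) (hsuper : ∀ t ∈ Icc τ σ, γ * f t * log (c / f t) ≤ f' t)
    (hτ : gompertz c a γ τ ≤ f τ) : gompertz c a γ σ ≤ f σ := by
  have hmono := monotoneOn_exp_mul_mul (γ := γ) (convex_Icc τ σ)
    (fun t ht => hasDerivWithinAt_log_div hc (hf t ht) (hpos t ht)) fun t ht => by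
      have h := hsuper t ht
      rw [log_div_rev] at h
      rw [le_div_iff₀ (hpos t ht)]
      linarith
  rw [gompertz_le_iff hc ha (hpos τ ⟨le_rfl, hτσ⟩)] at hτ
  rw [gompertz_le_iff hc ha (hpos σ ⟨hτσ, le_rfl⟩)]
  exact hτ.trans (hmono ⟨le_rfl, hτσ⟩ ⟨hτσ, le_rfl⟩ hτσ)

lemma le_gompertz_of_subsolution {f f' : ℝ → ℝ} {c a γ τ σ : ℝ} (hc : 0 < c) (ha : 0 < a)
    (hτσ : τ ≤ σ) (hf : ∀ t ∈ Icc τ σ, HasDerivWithinAt f (f' t) (Icc τ σ) t)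
    (hpos : ∀ t ∈ Icc τ σ, 0 < f t) (hsub : ∀ t ∈ Icc τ σ, f' t ≤ γ * f t * log (c / f t))
    (hτ : f τ ≤ gompertz c a γ τ) : f σ ≤ gompertz c a γ σ := by
  have hanti := antitoneOn_exp_mul_mul (γ := γ) (convex_Icc τ σ)
    (fun t ht => hasDerivWithinAt_log_div hc (hf t ht) (hpos t ht)) fun t ht => by
      have h := hsub t ht
      rw [log_div_rev] at h
      rw [div_le_iff₀ (hpos t ht)]
      linarith
  rw [le_gompertz_iff hc ha (hpos τ ⟨le_rfl, hτσ⟩)] at hτ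
  rw [le_gompertz_iff hc ha (hpos σ ⟨hτσ, le_rfl⟩)]
  exact (hanti ⟨le_rfl, hτσ⟩ ⟨hτσ, le_rfl⟩ hτσ).trans hτ

lemma pot_mem_Icc {sm RM σx σr s s' d : ℝ} (hsm : 0 < sm) (hRM : 0 < RM) (h1 : sm ≤ s')
    (h2 : s' ≤ sm * exp RM) : pot sm RM σx σr s s' d ∈ Icc 0 1 := by
  have hq : 0 ≤ d ^ 2 / σx ^ 2 := by positivity
  have hlog0 : 0 ≤ log (s' / sm) := log_nonneg ((one_le_div hsm).2 h1)
  have hlogRM : log (s' / sm) ≤ RM := by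
    rw [log_le_iff_le_exp (div_pos (hsm.trans_le h1) hsm), div_le_iff₀ hsm, mul_comm]
    exact h2
  have hA : log (s' / sm) / (2 * RM * (1 + d ^ 2 / σx ^ 2)) ≤ 1 / 2 := by
    rw [div_le_iff₀ (by positivity)]
    nlinarith
  have hT := neg_one_lt_tanh (log (s' / s) / σr)
  have hT' := tanh_lt_one (log (s' / s) / σr)
  refine ⟨mul_nonneg (by positivity) (by linarith), ?_⟩
  calc pot sm RM σx σr s s' d ≤ 1 / 2 * 2 :=
        mul_le_mul hA (by linarith) (by linarith) (by norm_num)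
    _ = 1 := by norm_num

lemma cIdx_mem_Icc {sm RM σx σr : ℝ} {N : ℕ} {x : Fin N → EuclideanSpace ℝ (Fin 2)}
    {s : Fin N → ℝ → ℝ} {i : Fin N} {t : ℝ} (hsm : 0 < sm) (hRM : 0 < RM)
    (hbox : ∀ j, sm ≤ s j t ∧ s j t ≤ sm * exp RM) : cIdx sm RM σx σr x s i t ∈ Icc 0 1 := by
  have hmem j : pot sm RM σx σr (s i t) (s j t) (dist (x i) (x j)) ∈ Icc 0 1 :=
    pot_mem_Icc hsm hRM (hbox j).1 (hbox j).2
  have hN : (0 : ℝ) ≤ N - 1 := by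
    have : (1 : ℝ) ≤ N := by exact_mod_cast i.pos
    linarith
  have hsum : ∑ j ∈ Finset.univ.erase i, pot sm RM σx σr (s i t) (s j t) (dist (x i) (x j))
      ≤ N - 1 := by
    refine (Finset.sum_le_card_nsmul _ _ 1 fun j _ => (hmem j).2).trans_eq ?_
    rw [Finset.card_erase_of_mem (Finset.mem_univ i), Finset.card_univ, Fintype.card_fin,
      nsmul_one, Nat.cast_pred i.pos]
  rw [cIdx, one_div_mul_eq_div]
  exact ⟨div_nonneg (Finset.sum_nonneg fun j _ => (hmem j).1) hN, div_le_one_of_le₀ hsum hN⟩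

lemma competition_rate_mem_Icc {γ s sm S C : ℝ} (hγ : 0 ≤ γ) (hs : 0 < s) (hsm : 0 < sm)
    (hS : sm ≤ S) (hC : C ∈ Icc 0 1) :
    γ * s * (log (S / sm) * (1 - C) - log (s / sm)) ∈
      Icc (γ * s * log (sm / s)) (γ * s * log (S / s)) := by
  have hL : 0 ≤ log (S / sm) := log_nonneg ((one_le_div hsm).2 hS)
  have hlog : log (S / s) = log (S / sm) - log (s / sm) := by
    rw [← log_div (div_pos (hsm.trans_le hS) hsm).ne' (div_pos hs hsm).ne',
      div_div_div_cancel_right₀ hsm.ne']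
  have hgs : 0 ≤ γ * s := by positivity
  rw [Real.log_div_rev, hlog]
  constructor
  · nlinarith [mul_nonneg hgs (mul_nonneg hL (sub_nonneg.2 hC.2))]
  · nlinarith [mul_nonneg hgs (mul_nonneg hL hC.1)]

def sandwichSet (sm : ℝ) {N : ℕ} (s0 Sa γ : Fin N → ℝ) (s : Fin N → ℝ → ℝ) : Set ℝ :=
  {t | ∀ j, gompertz sm (s0 j) (γ j) t ≤ s j t ∧ s j t ≤ gompertz (Sa j) (s0 j) (γ j) t}

lemma isClosed_sandwichSet_inter {sm : ℝ} {N : ℕ} {s0 Sa γ : Fin N → ℝ} {s : Fin N → ℝ → ℝ}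
    {A : Set ℝ} (hA : IsClosed A) (hs : ∀ j, ContinuousOn (s j) A) :
    IsClosed (sandwichSet sm s0 Sa γ s ∩ A) := by
  have hset : sandwichSet sm s0 Sa γ s ∩ A =
      {t ∈ A | (fun j => gompertz sm (s0 j) (γ j) t) ≤ fun j => s j t} ∩
        {t ∈ A | (fun j => s j t) ≤ fun j => gompertz (Sa j) (s0 j) (γ j) t} := by
    ext t
    simp only [sandwichSet, mem_inter_iff, mem_ofPred_eq, Pi.le_def, forall_and]
    tauto
  rw [hset]
  exact (hA.isClosed_le (continuousOn_pi.2 fun j => (continuous_gompertz _ _ _).continuousOn)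
    (continuousOn_pi.2 hs)).inter
    (hA.isClosed_le (continuousOn_pi.2 hs)
      (continuousOn_pi.2 fun j => (continuous_gompertz _ _ _).continuousOn))

section CompetitionSystem

variable {sm RM σx σr : ℝ} {N : ℕ} {s0 Sa γ : Fin N → ℝ} {x : Fin N → EuclideanSpace ℝ (Fin 2)}
  {s : Fin N → ℝ → ℝ}

lemma IsCompetitionSol.sandwichSet_mem_nhdsGT (hs : IsCompetitionSol sm RM σx σr s0 x Sa γ s)
    (hsm : 0 < sm) (hRM : 0 < RM) (hinit : ∀ i, sm < s0 i ∧ s0 i < Sa i)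
    (hS : ∀ i, sm < Sa i ∧ Sa i < sm * exp RM) (hγ : ∀ i, 0 < γ i) {τ : ℝ} (hτ0 : 0 ≤ τ)
    (hτ : τ ∈ sandwichSet sm s0 Sa γ s) : sandwichSet sm s0 Sa γ s ∈ 𝓝[>] τ := by
  have hs0 j : 0 < s0 j := hsm.trans (hinit j).1
  have hSa j : 0 < Sa j := hsm.trans (hS j).1
  have hstrict j : s j τ ∈ Ioo sm (Sa j) :=
    ⟨(lt_gompertz hsm (hinit j).1).trans_le (hτ j).1,
      (hτ j).2.trans_lt (gompertz_lt (hSa j) (hs0 j) (hinit j).2)⟩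
  have hev : ∀ᶠ σ in 𝓝[≥] τ, ∀ j, s j σ ∈ Ioo sm (Sa j) :=
    eventually_all.2 fun j => (((hs j).2 τ hτ0).continuousWithinAt.mono
      (Ici_subset_Ici.2 hτ0)).eventually_mem (Ioo_mem_nhds (hstrict j).1 (hstrict j).2)
  obtain ⟨u, hτu, hbox⟩ := mem_nhdsGE_iff_exists_Icc_subset.1 hev
  filter_upwards [Ioc_mem_nhdsGT hτu] with σ hσ j
  have hsub : Icc τ σ ⊆ Ici 0 := fun r hr => hτ0.trans hr.1
  have hpos : ∀ t ∈ Icc τ σ, 0 < s j t := fun t ht =>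
    hsm.trans (hbox (Icc_subset_Icc_right hσ.2 ht) j).1
  have hder : ∀ t ∈ Icc τ σ, HasDerivWithinAt (s j) _ (Icc τ σ) t := fun t ht =>
    ((hs j).2 t (hsub ht)).mono hsub
  have hrate : ∀ t ∈ Icc τ σ,
      γ j * s j t * (log (Sa j / sm) * (1 - cIdx sm RM σx σr x s j t) - log (s j t / sm)) ∈
        Icc (γ j * s j t * log (sm / s j t)) (γ j * s j t * log (Sa j / s j t)) := fun t ht =>
    competition_rate_mem_Icc (hγ j).le (hpos t ht) hsm (hS j).1.le <| cIdx_mem_Icc hsm hRM fun k =>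
      ⟨(hbox (Icc_subset_Icc_right hσ.2 ht) k).1.le,
        ((hbox (Icc_subset_Icc_right hσ.2 ht) k).2.trans (hS k).2).le⟩
  exact ⟨gompertz_le_of_supersolution hsm (hs0 j) hσ.1.le hder hpos
      (fun t ht => (hrate t ht).1) (hτ j).1,
    le_gompertz_of_subsolution (hSa j) (hs0 j) hσ.1.le hder hpos
      (fun t ht => (hrate t ht).2) (hτ j).2⟩

theorem IsCompetitionSol.mem_sandwichSet (hs : IsCompetitionSol sm RM σx σr s0 x Sa γ s)
    (hsm : 0 < sm) (hRM : 0 < RM) (hinit : ∀ i, sm < s0 i ∧ s0 i < Sa i)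
    (hS : ∀ i, sm < Sa i ∧ Sa i < sm * exp RM) (hγ : ∀ i, 0 < γ i) {t : ℝ} (ht : 0 ≤ t) :
    t ∈ sandwichSet sm s0 Sa γ s := by
  have hzero : (0 : ℝ) ∈ sandwichSet sm s0 Sa γ s := fun j => by
    rw [gompertz_zero _ _ _ hsm.ne', gompertz_zero _ _ _ (hsm.trans (hS j).1).ne', (hs j).1]
    exact ⟨le_rfl, le_rfl⟩
  refine IsClosed.Icc_subset_of_forall_mem_nhdsWithin ?_ hzero
    (fun τ hτ => hs.sandwichSet_mem_nhdsGT hsm hRM hinit hS hγ hτ.2.1 hτ.1) ⟨ht, le_rfl⟩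
  exact isClosed_sandwichSet_inter isClosed_Icc fun j r hr =>
    ((hs j).2 r hr.1).continuousWithinAt.mono Icc_subset_Ici_self

end CompetitionSystem

theorem stmt_2_general (sm RM σx σr : ℝ) (hsm : 0 < sm) (hRM : 0 < RM)
    (N : ℕ) (s0 Sa γ : Fin N → ℝ) (x : Fin N → EuclideanSpace ℝ (Fin 2))
    (hinit : ∀ i, sm < s0 i ∧ s0 i < Sa i)
    (hS : ∀ i, sm < Sa i ∧ Sa i < sm * Real.exp RM)
    (hγ : ∀ i, 0 < γ i)
    (s : Fin N → ℝ → ℝ) (hs : IsCompetitionSol sm RM σx σr s0 x Sa γ s) :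
    ∀ i, ∀ t, 0 ≤ t →
      sm * (s0 i / sm) ^ Real.exp (-(γ i) * t) ≤ s i t ∧
      s i t ≤ Sa i * (s0 i / sm) ^ Real.exp (-(γ i) * t) ∧
      sm < s i t ∧ s i t < Sa i := by
  intro i t ht
  obtain ⟨hlower, hupper⟩ := hs.mem_sandwichSet hsm hRM hinit hS hγ ht i
  have hs0 : 0 < s0 i := hsm.trans (hinit i).1
  have hSa : 0 < Sa i := hsm.trans (hS i).1
  have hlt : s i t < Sa i := hupper.trans_lt (gompertz_lt hSa hs0 (hinit i).2)
  refine ⟨hlower, hlt.le.trans (le_mul_of_one_le_right hSa.le ?_),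
    (lt_gompertz hsm (hinit i).1).trans_le hlower, hlt⟩
  exact one_le_rpow ((one_le_div hsm).2 (hinit i).1.le) (exp_pos _).le

/-- sandwich bound `s_m (s_i^0/s_m)^{e^{−γ_i t}} ≤ s_i(t) ≤ S_i (s_i^0/s_m)^{e^{−γ_i t}}`
for the unique global solution of the competition system; in particular `s_m < s_i(t) < S_i`. -/
theorem stmt_2 (sm RM σx σr : ℝ) (hsm : 0 < sm) (hRM : 0 < RM) (hσx : 0 < σx) (hσr : 0 < σr)
    (N : ℕ) (hN : 1 < N) (s0 Sa γ : Fin N → ℝ) (x : Fin N → EuclideanSpace ℝ (Fin 2))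
    (hinit : ∀ i, sm < s0 i ∧ s0 i < Sa i)
    (hS : ∀ i, sm < Sa i ∧ Sa i < sm * Real.exp RM)
    (hγ : ∀ i, 0 < γ i)
    (s : Fin N → ℝ → ℝ) (hs : IsCompetitionSol sm RM σx σr s0 x Sa γ s) :
    ∀ i, ∀ t, 0 ≤ t →
      sm * (s0 i / sm) ^ Real.exp (-(γ i) * t) ≤ s i t ∧
      s i t ≤ Sa i * (s0 i / sm) ^ Real.exp (-(γ i) * t) ∧
      sm < s i t ∧ s i t < Sa i :=
  stmt_2_general sm RM σx σr hsm hRM N s0 Sa γ x hinit hS hγ s hs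
end

section
/- Under the hypotheses s_m < s_i^0 < S_i, s_m < S_i < s_m·e^{R_M}, γ_i > 0 for all i, the unique global solution of the competition system admits, for every i and every t ≥ 0, the explicit representation s_i(t) = s_m·(s_i^0/s_m)^{e^{−γ_i t}} · exp( log(S_i/s_m)·γ_i·∫_0^t (1 − C_i^N(τ))·e^{γ_i(τ−t)} dτ ). -/
/-! On any interval `[0, t]` on which all sizes stay positive, `w = log (s_i / s_m)` solves the
linear relaxation equation `w' = γ_i (log (S_i / s_m) (1 - C_i^N) - w)`, and variation of constants
is the claimed representation. The sizes do stay positive: the potential is bounded by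
`|s_j / s_m| / R_M`, so `C_i^N` is bounded on `[0, T]` for a first zero `T`, and since
`log (S_i / s_m) ≥ 0` the representation bounds `s_i` below on `[0, T)` by a positive constant,
which passes to `s_i(T)` by continuity. -/

open MeasureTheory Set

open Real

@[fun_prop]
theorem Real.continuous_tanh : Continuous tanh := by
  simp only [funext tanh_eq_sinh_div_cosh]
  exact continuous_sinh.div continuous_cosh fun x => (cosh_pos x).ne'

-- `log y ≤ |y|` for every real `y`, junk value `log 0 = 0` included, so no positivity is needed.
theorem pot_le_abs_div (sm σx σr s s' d : ℝ) {RM : ℝ} (hRM : 0 < RM) :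
    pot sm RM σx σr s s' d ≤ |s' / sm| / RM := by
  unfold pot
  set a := log (s' / sm)
  set b := 1 + tanh (log (s' / s) / σr)
  have hb0 : 0 ≤ b := by linarith [neg_one_lt_tanh (log (s' / s) / σr)]
  have hb2 : b ≤ 2 := by linarith [tanh_lt_one (log (s' / s) / σr)]
  have hD : 2 * RM ≤ 2 * RM * (1 + d ^ 2 / σx ^ 2) :=
    le_mul_of_one_le_right (by positivity) (le_add_of_nonneg_right (by positivity))
  have ha : a ≤ |s' / sm| := (log_abs (s' / sm)).symm.trans_le (log_le_self (abs_nonneg _))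
  rcases le_or_gt a 0 with ha0 | ha0
  · calc a / (2 * RM * (1 + d ^ 2 / σx ^ 2)) * b ≤ 0 :=
          mul_nonpos_of_nonpos_of_nonneg (div_nonpos_of_nonpos_of_nonneg ha0 (by positivity)) hb0
      _ ≤ |s' / sm| / RM := by positivity
  · calc a / (2 * RM * (1 + d ^ 2 / σx ^ 2)) * b ≤ a / (2 * RM) * 2 := by gcongr
      _ = a / RM := by field_simp
      _ ≤ |s' / sm| / RM := by gcongr

theorem cIdx_le_sum_abs (sm σx σr : ℝ) {RM : ℝ} (hRM : 0 < RM) {N : ℕ} (hN : 1 < N)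
    (x : Fin N → EuclideanSpace ℝ (Fin 2)) (s : Fin N → ℝ → ℝ) (i : Fin N) (t : ℝ) :
    cIdx sm RM σx σr x s i t ≤ ∑ j, |s j t / sm| / RM := by
  have hN1 : 1 ≤ (N : ℝ) - 1 := by
    have : (2 : ℝ) ≤ N := by exact_mod_cast hN
    linarith
  unfold cIdx
  calc 1 / ((N : ℝ) - 1) *
        ∑ j ∈ Finset.univ.erase i, pot sm RM σx σr (s i t) (s j t) (dist (x i) (x j))
      ≤ 1 / ((N : ℝ) - 1) * ∑ j ∈ Finset.univ.erase i, |s j t / sm| / RM := by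
        gcongr with j
        exact pot_le_abs_div sm σx σr _ _ _ hRM
    _ ≤ ∑ j ∈ Finset.univ.erase i, |s j t / sm| / RM :=
        mul_le_of_le_one_left (by positivity) ((div_le_one (by linarith)).2 hN1)
    _ ≤ ∑ j, |s j t / sm| / RM :=
        Finset.sum_le_sum_of_subset_of_nonneg (Finset.erase_subset _ _) fun _ _ _ => by positivity

theorem continuousOn_cIdx (sm RM σx σr : ℝ) {N : ℕ} (x : Fin N → EuclideanSpace ℝ (Fin 2))
    {s : Fin N → ℝ → ℝ} (i : Fin N) {U : Set ℝ} (hsm : sm ≠ 0)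
    (hcont : ∀ j, ContinuousOn (s j) U) (hpos : ∀ j, ∀ τ ∈ U, 0 < s j τ) :
    ContinuousOn (cIdx sm RM σx σr x s i) U := by
  unfold cIdx pot
  refine continuousOn_const.mul (continuousOn_finsetSum _ fun j _ => ?_)
  have hratio := (hcont j).div (hcont i) fun τ hτ => (hpos i τ hτ).ne'
  refine ((((hcont j).div_const sm).log fun τ hτ => ?_).div_const _).mul
    (continuousOn_const.add (continuous_tanh.comp_continuousOn
      ((hratio.log fun τ hτ => ?_).div_const σr)))
  · exact div_ne_zero (hpos j τ hτ).ne' hsm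
  · exact div_ne_zero (hpos j τ hτ).ne' (hpos i τ hτ).ne'

theorem eq_integral_of_hasDerivWithinAt_relaxation {w g : ℝ → ℝ} {γ t : ℝ} (ht : 0 ≤ t)
    (hw : ∀ τ ∈ Icc 0 t, HasDerivWithinAt w (γ * (g τ - w τ)) (Icc 0 t) τ)
    (hg : ContinuousOn g (Icc 0 t)) :
    w t = w 0 * exp (-γ * t) + γ * ∫ τ in (0 : ℝ)..t, g τ * exp (γ * (τ - t)) := by
  have hderiv : ∀ τ ∈ Icc 0 t, HasDerivWithinAt (fun τ => w τ * exp (γ * τ))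
      (γ * (g τ * exp (γ * τ))) (Icc 0 t) τ := by
    intro τ hτ
    have hexp : HasDerivAt (fun u => exp (γ * u)) (exp (γ * τ) * γ) τ := by
      simpa using ((hasDerivAt_id τ).const_mul γ).exp
    exact ((hw τ hτ).mul hexp.hasDerivWithinAt).congr_deriv (by ring)
  have hFTC := intervalIntegral.integral_eq_sub_of_hasDerivAt_of_le ht
    (fun τ hτ => (hderiv τ hτ).continuousWithinAt)
    (fun τ hτ => (hderiv τ (Ioo_subset_Icc_self hτ)).hasDerivAt (Icc_mem_nhds hτ.1 hτ.2))
    (ContinuousOn.intervalIntegrable (by rw [uIcc_of_le ht]; fun_prop))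
  have hshift : ∫ τ in (0 : ℝ)..t, g τ * exp (γ * (τ - t)) =
      exp (-γ * t) * ∫ τ in (0 : ℝ)..t, g τ * exp (γ * τ) := by
    rw [← intervalIntegral.integral_const_mul]
    refine intervalIntegral.integral_congr fun τ _ => ?_
    rw [mul_sub, sub_eq_add_neg, exp_add, neg_mul]
    ring
  rw [intervalIntegral.integral_const_mul] at hFTC
  have hinv : exp (γ * t) * exp (-γ * t) = 1 := by rw [← exp_add]; simp
  simp only [mul_zero, exp_zero, mul_one] at hFTC
  rw [hshift]
  linear_combination (-exp (-γ * t)) * hFTC - w t * hinv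

-- Otherwise `hstep` fails at the first zero `T = sInf Z`.
theorem forall_pos_of_pos_on_Ico {ι : Type*} [Finite ι] {f : ι → ℝ → ℝ}
    (hf : ∀ j, ContinuousOn (f j) (Ici 0)) (h0 : ∀ j, 0 < f j 0)
    (hstep : ∀ T, 0 < T → (∀ τ ∈ Ico 0 T, ∀ j, 0 < f j τ) → ∀ j, 0 < f j T) :
    ∀ t, 0 ≤ t → ∀ j, 0 < f j t := by
  by_contra! ⟨t₀, ht₀, j₁, hj₁⟩
  set Z := ⋃ j, Ici 0 ∩ f j ⁻¹' Iic 0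
  have hZ : IsClosed Z := isClosed_iUnion_of_finite fun j =>
    (hf j).preimage_isClosed_of_isClosed isClosed_Ici isClosed_Iic
  have hZbdd : BddBelow Z := ⟨0, fun z hz => by
    obtain ⟨j, hj⟩ := mem_iUnion.1 hz
    exact hj.1⟩
  obtain ⟨j₀, hT0, hj₀⟩ := mem_iUnion.1 (hZ.csInf_mem ⟨t₀, mem_iUnion.2 ⟨j₁, ht₀, hj₁⟩⟩ hZbdd)
  have hTpos : 0 < sInf Z := hT0.lt_of_ne fun h => (h0 j₀).not_ge (h ▸ hj₀)
  refine (hstep _ hTpos (fun τ hτ j => ?_) j₀).not_ge hj₀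
  by_contra! hle
  exact hτ.2.not_ge (csInf_le hZbdd (mem_iUnion.2 ⟨j, hτ.1, hle⟩))

namespace IsCompetitionSol

variable {sm RM σx σr : ℝ} {N : ℕ} {s0 Sa γ : Fin N → ℝ} {x : Fin N → EuclideanSpace ℝ (Fin 2)}
  {s : Fin N → ℝ → ℝ}

theorem continuousOn (hs : IsCompetitionSol sm RM σx σr s0 x Sa γ s) (j : Fin N) :
    ContinuousOn (s j) (Ici 0) :=
  fun τ hτ => ((hs j).2 τ hτ).continuousWithinAt

theorem log_div_eq (hs : IsCompetitionSol sm RM σx σr s0 x Sa γ s) (hsm : 0 < sm) (i : Fin N)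
    {t : ℝ} (ht : 0 ≤ t) (hpos : ∀ j, ∀ τ ∈ Icc 0 t, 0 < s j τ) :
    log (s i t / sm) = log (s0 i / sm) * exp (-γ i * t) +
      log (Sa i / sm) * γ i *
        ∫ τ in (0 : ℝ)..t, (1 - cIdx sm RM σx σr x s i τ) * exp (γ i * (τ - t)) := by
  have hC := continuousOn_cIdx sm RM σx σr x i hsm.ne'
    (fun j => (hs.continuousOn j).mono Icc_subset_Ici_self) hpos
  have key := eq_integral_of_hasDerivWithinAt_relaxation (w := fun τ => log (s i τ / sm))
    (g := fun τ => log (Sa i / sm) * (1 - cIdx sm RM σx σr x s i τ)) (γ := γ i) ht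
    (fun τ hτ => by
      have hsτ := hpos i τ hτ
      refine (((((hs i).2 τ hτ.1).div_const sm).log (div_pos hsτ hsm).ne').mono
        Icc_subset_Ici_self).congr_deriv ?_
      field_simp)
    (by fun_prop)
  simp only [(hs i).1, mul_assoc, intervalIntegral.integral_const_mul] at key
  rw [key]
  ring

theorem neg_le_log_div (hs : IsCompetitionSol sm RM σx σr s0 x Sa γ s) (hsm : 0 < sm)
    (i : Fin N) (hSa : sm ≤ Sa i) (hγ : 0 ≤ γ i) {t K : ℝ} (ht : 0 ≤ t) (hK : 0 ≤ K)
    (hpos : ∀ j, ∀ τ ∈ Icc 0 t, 0 < s j τ) (hC : ∀ τ ∈ Icc 0 t, cIdx sm RM σx σr x s i τ ≤ K) :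
    -(|log (s0 i / sm)| + log (Sa i / sm) * γ i * (K * t)) ≤ log (s i t / sm) := by
  have hexp : exp (-γ i * t) ≤ 1 := exp_le_one_iff.2 (by nlinarith)
  have hdecay : -|log (s0 i / sm)| ≤ log (s0 i / sm) * exp (-γ i * t) := by
    calc -|log (s0 i / sm)| ≤ -|log (s0 i / sm) * exp (-γ i * t)| := by
          rw [neg_le_neg_iff, abs_mul, abs_of_pos (exp_pos _)]
          exact mul_le_of_le_one_right (abs_nonneg _) hexp
      _ ≤ log (s0 i / sm) * exp (-γ i * t) := neg_abs_le _
  have hint : -(K * t) ≤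
      ∫ τ in (0 : ℝ)..t, (1 - cIdx sm RM σx σr x s i τ) * exp (γ i * (τ - t)) := by
    have hcont := continuousOn_cIdx sm RM σx σr x i hsm.ne'
      (fun j => (hs.continuousOn j).mono Icc_subset_Ici_self) hpos
    have := intervalIntegral.integral_mono_on ht (intervalIntegrable_const (μ := volume))
      (ContinuousOn.intervalIntegrable (by rw [uIcc_of_le ht]; fun_prop))
      (fun τ hτ => show -K ≤ (1 - cIdx sm RM σx σr x s i τ) * exp (γ i * (τ - t)) by
        have h1 : exp (γ i * (τ - t)) ≤ 1 := exp_le_one_iff.2 (by nlinarith [hτ.2])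
        nlinarith [hC τ hτ, exp_pos (γ i * (τ - t))])
    rw [intervalIntegral.integral_const, smul_eq_mul] at this
    linarith
  have hA : 0 ≤ log (Sa i / sm) * γ i :=
    mul_nonneg (log_nonneg ((one_le_div hsm).2 hSa)) hγ
  rw [hs.log_div_eq hsm i ht hpos]
  nlinarith

theorem pos_of_pos_on_Ico (hs : IsCompetitionSol sm RM σx σr s0 x Sa γ s) (hsm : 0 < sm)
    (hRM : 0 < RM) (hN : 1 < N) (i : Fin N) (hSa : sm ≤ Sa i) (hγ : 0 ≤ γ i) {T : ℝ}
    (hT : 0 < T) (hpos : ∀ τ ∈ Ico 0 T, ∀ j, 0 < s j τ) : 0 < s i T := by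
  have hcont : ∀ j, ContinuousOn (s j) (Icc 0 T) :=
    fun j => (hs.continuousOn j).mono Icc_subset_Ici_self
  obtain ⟨K, hK⟩ := isCompact_Icc.exists_bound_of_continuousOn
    (f := fun τ => ∑ j, |s j τ / sm| / RM) (by fun_prop)
  have hK0 : 0 ≤ K := (norm_nonneg _).trans (hK 0 ⟨le_rfl, hT.le⟩)
  set c := sm * exp (-(|log (s0 i / sm)| + log (Sa i / sm) * γ i * (K * T)))
  have hlow : ∀ t ∈ Ico 0 T, c ≤ s i t := by
    intro t ht
    have hpos' : ∀ j, ∀ τ ∈ Icc 0 t, 0 < s j τ :=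
      fun j τ hτ => hpos τ ⟨hτ.1, hτ.2.trans_lt ht.2⟩ j
    have hC : ∀ τ ∈ Icc 0 t, cIdx sm RM σx σr x s i τ ≤ K := fun τ hτ =>
      (cIdx_le_sum_abs sm σx σr hRM hN x s i τ).trans
        ((le_abs_self _).trans (hK τ ⟨hτ.1, hτ.2.trans ht.2.le⟩))
    have hlog := hs.neg_le_log_div hsm i hSa hγ ht.1 hK0 hpos' hC
    have hA : 0 ≤ log (Sa i / sm) * γ i * K :=
      mul_nonneg (mul_nonneg (log_nonneg ((one_le_div hsm).2 hSa)) hγ) hK0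
    calc c ≤ sm * exp (log (s i t / sm)) :=
          mul_le_mul_of_nonneg_left (exp_le_exp.2 (by nlinarith [ht.2])) hsm.le
      _ = s i t := by rw [exp_log (div_pos (hpos t ht i) hsm)]; field_simp
  have hcl : closure (Ico 0 T) = Icc 0 T := closure_Ico hT.ne
  exact (by positivity : 0 < c).trans_le
    (le_on_closure hlow (by rw [hcl]; fun_prop) (by rw [hcl]; exact hcont i)
      (by rw [hcl]; exact ⟨hT.le, le_rfl⟩))

theorem pos (hs : IsCompetitionSol sm RM σx σr s0 x Sa γ s) (hsm : 0 < sm) (hRM : 0 < RM)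
    (hN : 1 < N) (hs0 : ∀ i, 0 < s0 i) (hSa : ∀ i, sm ≤ Sa i) (hγ : ∀ i, 0 ≤ γ i) :
    ∀ t, 0 ≤ t → ∀ j, 0 < s j t :=
  forall_pos_of_pos_on_Ico hs.continuousOn (fun j => (hs j).1 ▸ hs0 j)
    fun _ hT hpos j => hs.pos_of_pos_on_Ico hsm hRM hN j (hSa j) (hγ j) hT hpos

end IsCompetitionSol

theorem stmt_3_general (sm RM σx σr : ℝ) (hsm : 0 < sm) (hRM : 0 < RM)
    (N : ℕ) (hN : 1 < N) (s0 Sa γ : Fin N → ℝ) (x : Fin N → EuclideanSpace ℝ (Fin 2))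
    (hinit : ∀ i, sm < s0 i ∧ s0 i < Sa i)
    (hS : ∀ i, sm < Sa i ∧ Sa i < sm * Real.exp RM)
    (hγ : ∀ i, 0 < γ i)
    (s : Fin N → ℝ → ℝ) (hs : IsCompetitionSol sm RM σx σr s0 x Sa γ s) :
    ∀ i, ∀ t, 0 ≤ t →
      s i t = sm * (s0 i / sm) ^ Real.exp (-(γ i) * t) *
        Real.exp (Real.log (Sa i / sm) * γ i *
          ∫ τ in (0:ℝ)..t,
            (1 - cIdx sm RM σx σr x s i τ) * Real.exp (γ i * (τ - t))) := by
  have hs0 : ∀ i, 0 < s0 i := fun i => hsm.trans (hinit i).1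
  have hpos := hs.pos hsm hRM hN hs0 (fun i => (hS i).1.le) (fun i => (hγ i).le)
  intro i t ht
  have hlog := hs.log_div_eq hsm i ht fun j τ hτ => hpos τ hτ.1 j
  calc s i t = sm * exp (log (s i t / sm)) := by
        rw [exp_log (div_pos (hpos t ht i) hsm)]
        field_simp
    _ = _ := by
        rw [hlog, exp_add, ← rpow_def_of_pos (div_pos (hs0 i) hsm)]
        ring

/-- explicit representation of the solution of the competition system via the
time-averaged competition index. -/
theorem stmt_3 (sm RM σx σr : ℝ) (hsm : 0 < sm) (hRM : 0 < RM) (hσx : 0 < σx) (hσr : 0 < σr)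
    (N : ℕ) (hN : 1 < N) (s0 Sa γ : Fin N → ℝ) (x : Fin N → EuclideanSpace ℝ (Fin 2))
    (hinit : ∀ i, sm < s0 i ∧ s0 i < Sa i)
    (hS : ∀ i, sm < Sa i ∧ Sa i < sm * Real.exp RM)
    (hγ : ∀ i, 0 < γ i)
    (s : Fin N → ℝ → ℝ) (hs : IsCompetitionSol sm RM σx σr s0 x Sa γ s) :
    ∀ i, ∀ t, 0 ≤ t →
      s i t = sm * (s0 i / sm) ^ Real.exp (-(γ i) * t) *
        Real.exp (Real.log (Sa i / sm) * γ i *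
          ∫ τ in (0:ℝ)..t,
            (1 - cIdx sm RM σx σr x s i τ) * Real.exp (γ i * (τ - t))) :=
  stmt_3_general sm RM σx σr hsm hRM N hN s0 Sa γ x hinit hS hγ s hs
end
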